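/- Let G be a k-chromatic graph (k ≥ 2) with an implicit-edge {u,v}, and let S be an independent set of G with u ∉ S, v ∉ S and χ(G − S) = k − 1. Then {u,v} is an implicit-edge of G − S, i.e., in every proper (k−1)-coloring of G − S, u and v receive different colors. -/

import Mathlib

/-! A `(k - 1)`-colouring of `G - S` giving `u` and `v` the same colour extends, by putting the
independent set `S` into one new colour class, to a `k`-colouring of `G` that still gives `u`
and `v` the same colour. -/

namespace SimpleGraph

variable {V α : Type*} {G : SimpleGraph V} {S : Set V}

open Classical in
noncomputable def Coloring.extendOfIsIndepSet (c : (G.induce Sᶜ).Coloring α) (hS : G.IsIndepSet S) :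
    G.Coloring (Option α) :=
  Coloring.mk (fun w => if h : w ∈ S then none else some (c ⟨w, h⟩)) fun {a b} hab => by
    by_cases ha : a ∈ S <;> by_cases hb : b ∈ S
    · exact absurd hab (hS ha hb hab.ne)
    · simp [ha, hb]
    · simp [ha, hb]
    · simpa [ha, hb] using c.valid (show (G.induce Sᶜ).Adj ⟨a, ha⟩ ⟨b, hb⟩ from hab)

theorem Coloring.extendOfIsIndepSet_apply_of_notMem (c : (G.induce Sᶜ).Coloring α)
    (hS : G.IsIndepSet S) {w : V} (hw : w ∉ S) :
    c.extendOfIsIndepSet hS w = some (c ⟨w, hw⟩) :=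
  dif_neg hw

end SimpleGraph

open SimpleGraph in
theorem implicit_edge_invariant_general {V : Type*}
    (G : SimpleGraph V) (k : ℕ)
    (u v : V) (hie : ∀ c : G.Coloring (Fin k), c u ≠ c v)
    (S : Set V) (hS : ∀ a ∈ S, ∀ b ∈ S, ¬ G.Adj a b)
    (hu : u ∉ S) (hv : v ∉ S) :
    ∀ c : (G.induce Sᶜ).Coloring (Fin (k - 1)), c ⟨u, hu⟩ ≠ c ⟨v, hv⟩ := by
  intro c hcuv
  have hk : k - 1 + 1 = k := by have := (c ⟨u, hu⟩).pos; omega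
  let recolor : Option (Fin (k - 1)) ≃ Fin k := (finSuccEquiv (k - 1)).symm.trans (finCongr hk)
  have hS' : G.IsIndepSet S := fun a ha b hb _ => hS a ha b hb
  apply hie ((Iso.completeGraph recolor).toHom.comp (c.extendOfIsIndepSet hS'))
  have hc' : c.extendOfIsIndepSet hS' u = c.extendOfIsIndepSet hS' v := by
    rw [Coloring.extendOfIsIndepSet_apply_of_notMem _ _ hu,
      Coloring.extendOfIsIndepSet_apply_of_notMem _ _ hv, hcuv]
  exact congrArg recolor hc'

/-- If `{u,v}` is an implicit-edge of a `k`-chromatic graph `G` (`k ≥ 2`)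
and `S` is a critical independent set avoiding `u` and `v`, then `{u,v}` is an
implicit-edge of `G - S`. -/
theorem implicit_edge_invariant {V : Type*} [Fintype V]
    (G : SimpleGraph V) (k : ℕ) (hk2 : 2 ≤ k) (hk : G.chromaticNumber = k)
    (u v : V) (hie : ∀ c : G.Coloring (Fin k), c u ≠ c v)
    (S : Set V) (hS : ∀ a ∈ S, ∀ b ∈ S, ¬ G.Adj a b)
    (hu : u ∉ S) (hv : v ∉ S)
    (hcrit : (G.induce Sᶜ).chromaticNumber = ((k - 1 : ℕ) : ℕ∞)) :
    ∀ c : (G.induce Sᶜ).Coloring (Fin (k - 1)), c ⟨u, hu⟩ ≠ c ⟨v, hv⟩ :=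
  implicit_edge_invariant_general G k u v hie S hS hu hv
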